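/- Let β₃ ≠ 1 and β₄ ∈ ℂ, β₄ ≠ 0. The function D₀¹(μ) = (1 − e^{−iμ})[iμ(1 − β₃)(e^{iμ} − 1) + β₄(e^{iμ} + 1)] vanishes exactly at the points μ = 2πn, n ∈ ℤ, and at points μ_n which for large n satisfy μ_n = 2πn + (β₄/(1 − β₃))·1/(πn) + O(1/n²). -/

import Mathlib

/-!
The first factor `1 - exp (-I μ)` vanishes exactly on `2πℤ`. Writing `b = β₄`, `c = 1 - β₃`, a zero
of the second factor is a solution of `exp (I μ) = (I μ c - b) / (I μ c + b) = 1 + u(μ)`, where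
`u(μ) = -2 b / (I μ c + b) = O(1 / μ)`. Near `z = 2πn` this is the fixed-point equation
`μ = z - I log (1 + u(μ))`, whose right-hand side is a contraction of the unit disc around `z` once
`n` is large (Banach). Expanding the logarithm, the fixed point is
`μ = z - I u(μ) + O(u²) = z + 2b / (c z) + O(1 / n²)`.
-/

open Complex Real

section

open Metric Set Function
open scoped NNReal

theorem exists_mem_closedBall_isFixedPt {𝕜 : Type*} [RCLike 𝕜] {f f' : 𝕜 → 𝕜} {x : 𝕜} {r : ℝ}
    {K : ℝ≥0} (hK : K < 1) (hr : 0 ≤ r) (hmaps : MapsTo f (closedBall x r) (closedBall x r))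
    (hf : ∀ y ∈ closedBall x r, HasDerivAt f (f' y) y)
    (hf' : ∀ y ∈ closedBall x r, ‖f' y‖ ≤ K) :
    ∃ y ∈ closedBall x r, IsFixedPt f y := by
  have hlip : LipschitzOnWith K f (closedBall x r) :=
    (convex_closedBall x r).lipschitzOnWith_of_nnnorm_hasDerivWithin_le
      (fun y hy => (hf y hy).hasDerivWithinAt) (fun y hy => hf' y hy)
  obtain ⟨y, hy, hfix, -⟩ := ContractingWith.exists_fixedPoint' isClosed_closedBall.isComplete
    hmaps ⟨hK, hlip.mapsToRestrict hmaps⟩ (mem_closedBall_self hr) (edist_ne_top _ _)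
  exact ⟨y, hy, hfix⟩

theorem Complex.norm_log_one_add_sub_self_le_sq {u : ℂ} (hu : ‖u‖ ≤ 1 / 2) :
    ‖log (1 + u) - u‖ ≤ ‖u‖ ^ 2 := by
  have hinv : (1 - ‖u‖)⁻¹ ≤ 2 := by
    rw [inv_le_comm₀ (by linarith) two_pos]; linarith
  calc ‖log (1 + u) - u‖ ≤ ‖u‖ ^ 2 * (1 - ‖u‖)⁻¹ / 2 :=
        norm_log_one_add_sub_self_le (hu.trans_lt one_half_lt_one)
    _ ≤ ‖u‖ ^ 2 * 2 / 2 := by gcongr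
    _ = ‖u‖ ^ 2 := by ring

theorem one_sub_exp_neg_I_mul_eq_zero_iff {μ : ℂ} :
    1 - exp (-I * μ) = 0 ↔ ∃ n : ℤ, μ = 2 * π * n := by
  rw [sub_eq_zero, eq_comm, Complex.exp_eq_one_iff]
  constructor
  · rintro ⟨k, hk⟩
    exact ⟨-k, by push_cast; linear_combination I * hk + (μ + 2 * π * k) * I_sq⟩
  · rintro ⟨k, hk⟩
    exact ⟨-k, by push_cast; linear_combination (-I) * hk⟩

/-- The second factor of `D₀¹`, with `b = β₄` and `c = 1 - β₃`. -/
noncomputable def charFactor (b c μ : ℂ) : ℂ :=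
  I * μ * c * (exp (I * μ) - 1) + b * (exp (I * μ) + 1)

/-- Away from `I * μ * c + b = 0`, `charFactor b c μ = 0` iff
`exp (I * μ) = 1 + expDefect b c μ`. -/
noncomputable def expDefect (b c μ : ℂ) : ℂ := -2 * b / (I * μ * c + b)

theorem charFactor_eq_zero_of_exp_eq {b c μ : ℂ} (hw : I * μ * c + b ≠ 0)
    (hexp : exp (I * μ) = 1 + expDefect b c μ) : charFactor b c μ = 0 := by
  rw [charFactor, hexp, expDefect]
  field_simp
  ring

theorem hasDerivAt_expDefect {b c μ : ℂ} (hw : I * μ * c + b ≠ 0) :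
    HasDerivAt (expDefect b c) (-expDefect b c μ * (I * c) / (I * μ * c + b)) μ := by
  have hlin : HasDerivAt (fun μ => I * μ * c + b) (I * c) μ := by
    simpa using (((hasDerivAt_id μ).const_mul I).mul_const c).add_const b
  refine ((hasDerivAt_const μ (-2 * b)).div hlin hw).congr_deriv ?_
  unfold expDefect
  field_simp
  ring

section LargeRoots

variable {b c z μ : ℂ}

theorem norm_mul_div_two_le_norm_I_mul_mul_add (hz : 8 * (‖b‖ + ‖c‖) ≤ ‖c‖ * ‖z‖)
    (hμ : μ ∈ closedBall z 1) : ‖c‖ * ‖z‖ / 2 ≤ ‖I * μ * c + b‖ := by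
  have hμz : ‖z‖ - 1 ≤ ‖μ‖ := by
    have := norm_sub_norm_le z μ
    rw [mem_closedBall, dist_eq_norm, ← norm_neg, neg_sub] at hμ
    linarith
  have hw : ‖μ‖ * ‖c‖ - ‖b‖ ≤ ‖I * μ * c + b‖ := by
    simpa [norm_mul] using norm_sub_norm_le (I * μ * c) (-b)
  nlinarith [norm_nonneg c, norm_nonneg b]

theorem norm_mul_norm_pos (hc : c ≠ 0) (hz : 8 * (‖b‖ + ‖c‖) ≤ ‖c‖ * ‖z‖) :
    0 < ‖c‖ * ‖z‖ := by
  linarith [norm_pos_iff.mpr hc, norm_nonneg b]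

theorem I_mul_mul_add_ne_zero (hc : c ≠ 0) (hz : 8 * (‖b‖ + ‖c‖) ≤ ‖c‖ * ‖z‖)
    (hμ : μ ∈ closedBall z 1) : I * μ * c + b ≠ 0 :=
  norm_pos_iff.mp <| (half_pos (norm_mul_norm_pos hc hz)).trans_le
    (norm_mul_div_two_le_norm_I_mul_mul_add hz hμ)

theorem norm_expDefect_le (hc : c ≠ 0) (hz : 8 * (‖b‖ + ‖c‖) ≤ ‖c‖ * ‖z‖)
    (hμ : μ ∈ closedBall z 1) : ‖expDefect b c μ‖ ≤ 4 * ‖b‖ / (‖c‖ * ‖z‖) := by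
  have hpos := norm_mul_norm_pos hc hz
  have hw := norm_mul_div_two_le_norm_I_mul_mul_add hz hμ
  calc ‖expDefect b c μ‖ = 2 * ‖b‖ / ‖I * μ * c + b‖ := by simp [expDefect]
    _ ≤ 2 * ‖b‖ / (‖c‖ * ‖z‖ / 2) := by gcongr
    _ = 4 * ‖b‖ / (‖c‖ * ‖z‖) := by field_simp; ring

theorem norm_expDefect_le_half (hc : c ≠ 0) (hz : 8 * (‖b‖ + ‖c‖) ≤ ‖c‖ * ‖z‖)
    (hμ : μ ∈ closedBall z 1) : ‖expDefect b c μ‖ ≤ 1 / 2 := by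
  refine (norm_expDefect_le hc hz hμ).trans ?_
  rw [div_le_iff₀ (norm_mul_norm_pos hc hz)]
  linarith [norm_nonneg c]

theorem norm_deriv_expDefect_le (hc : c ≠ 0) (hz : 8 * (‖b‖ + ‖c‖) ≤ ‖c‖ * ‖z‖)
    (hμ : μ ∈ closedBall z 1) :
    ‖-expDefect b c μ * (I * c) / (I * μ * c + b)‖ ≤ 1 / 8 := by
  have hC : 0 < ‖c‖ := norm_pos_iff.mpr hc
  have hz8 : 8 ≤ ‖z‖ := le_of_mul_le_mul_left (by nlinarith [norm_nonneg b]) hC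
  have hw := norm_mul_div_two_le_norm_I_mul_mul_add hz hμ
  have hcw : ‖c‖ / ‖I * μ * c + b‖ ≤ 1 / 4 := by
    rw [div_le_iff₀ (by nlinarith)]
    nlinarith
  calc ‖-expDefect b c μ * (I * c) / (I * μ * c + b)‖
        = ‖expDefect b c μ‖ * (‖c‖ / ‖I * μ * c + b‖) := by simp [mul_div_assoc]
    _ ≤ 1 / 2 * (1 / 4) := by
        gcongr
        exact norm_expDefect_le_half hc hz hμ
    _ = 1 / 8 := by norm_num

theorem exists_mem_closedBall_I_mul_sub_eq_log (hc : c ≠ 0)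
    (hz : 8 * (‖b‖ + ‖c‖) ≤ ‖c‖ * ‖z‖) :
    ∃ μ ∈ closedBall z 1, I * (μ - z) = log (1 + expDefect b c μ) := by
  have hu {μ} (hμ : μ ∈ closedBall z 1) := norm_expDefect_le_half hc hz hμ
  have hderiv : ∀ μ ∈ closedBall z 1, HasDerivAt (fun μ => z - I * log (1 + expDefect b c μ))
      (-I * ((-expDefect b c μ * (I * c) / (I * μ * c + b)) / (1 + expDefect b c μ))) μ := by
    intro μ hμ
    simpa using (((hasDerivAt_expDefect (I_mul_mul_add_ne_zero hc hz hμ)).const_add 1).clog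
      (mem_slitPlane_of_norm_lt_one ((hu hμ).trans_lt one_half_lt_one))).const_mul I |>.const_sub z
  have hmaps : MapsTo (fun μ => z - I * log (1 + expDefect b c μ))
      (closedBall z 1) (closedBall z 1) := by
    intro μ hμ
    rw [mem_closedBall, dist_eq_norm]
    simp only [sub_sub_cancel_left, norm_neg, norm_mul, norm_I, one_mul]
    linarith [norm_log_one_add_half_le_self (hu hμ), hu hμ]
  obtain ⟨μ, hμ, hfix⟩ := exists_mem_closedBall_isFixedPt (K := 1 / 2) (by norm_num) zero_le_one
    hmaps hderiv fun μ hμ => by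
      have hlow : 1 - ‖expDefect b c μ‖ ≤ ‖1 + expDefect b c μ‖ := by
        simpa using norm_sub_norm_le (1 : ℂ) (-expDefect b c μ)
      rw [norm_mul, norm_neg, norm_I, one_mul, norm_div, div_le_iff₀ (by linarith [hu hμ])]
      push_cast
      nlinarith [norm_deriv_expDefect_le hc hz hμ, hu hμ]
  refine ⟨μ, hμ, ?_⟩
  have hfix : z - I * log (1 + expDefect b c μ) = μ := hfix
  linear_combination (-I) * hfix - log (1 + expDefect b c μ) * I_sq

theorem norm_sub_sub_le_of_I_mul_sub_eq_log (hc : c ≠ 0) (hz : 8 * (‖b‖ + ‖c‖) ≤ ‖c‖ * ‖z‖)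
    (hμ : μ ∈ closedBall z 1) (hlog : I * (μ - z) = log (1 + expDefect b c μ)) :
    ‖μ - z - 2 * b / (c * z)‖ ≤ 4 * ‖b‖ * (5 * ‖b‖ + ‖c‖) / (‖c‖ * ‖z‖) ^ 2 := by
  have hpos := norm_mul_norm_pos hc hz
  have hw := I_mul_mul_add_ne_zero hc hz hμ
  have hz0 : z ≠ 0 := by rintro rfl; simp at hpos
  have hμz : ‖z - μ‖ ≤ 1 := by rw [← dist_eq_norm, dist_comm]; exact hμ
  have hlin : -I * expDefect b c μ - 2 * b / (c * z)
      = 2 * b * (I * c * (z - μ) - b) / ((I * μ * c + b) * c * z) := by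
    rw [expDefect]
    field_simp
    ring
  have hsplit : μ - z - 2 * b / (c * z) = -I * (log (1 + expDefect b c μ) - expDefect b c μ)
      + 2 * b * (I * c * (z - μ) - b) / ((I * μ * c + b) * c * z) := by
    linear_combination (-I) * hlog + hlin + (μ - z) * I_sq
  set u := expDefect b c μ
  have hlog_bound : ‖log (1 + u) - u‖ ≤ (4 * ‖b‖ / (‖c‖ * ‖z‖)) ^ 2 :=
    (norm_log_one_add_sub_self_le_sq (norm_expDefect_le_half hc hz hμ)).trans
      (by gcongr; exact norm_expDefect_le hc hz hμ)
  have hnum : ‖2 * b * (I * c * (z - μ) - b)‖ ≤ 2 * ‖b‖ * (‖c‖ + ‖b‖) := by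
    rw [norm_mul, norm_mul, RCLike.norm_ofNat]
    gcongr
    calc ‖I * c * (z - μ) - b‖ ≤ ‖c‖ * ‖z - μ‖ + ‖b‖ := by
          simpa using norm_sub_le (I * c * (z - μ)) b
      _ ≤ ‖c‖ * 1 + ‖b‖ := by gcongr
      _ = ‖c‖ + ‖b‖ := by ring
  have hden : ‖c‖ * ‖z‖ / 2 * (‖c‖ * ‖z‖) ≤ ‖(I * μ * c + b) * c * z‖ := by
    rw [norm_mul, norm_mul, mul_assoc]
    gcongr
    exact norm_mul_div_two_le_norm_I_mul_mul_add hz hμ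
  rw [hsplit]
  calc ‖-I * (log (1 + u) - u) + 2 * b * (I * c * (z - μ) - b) / ((I * μ * c + b) * c * z)‖
      ≤ ‖log (1 + u) - u‖ + ‖2 * b * (I * c * (z - μ) - b)‖ / ‖(I * μ * c + b) * c * z‖ := by
        simpa [norm_div] using norm_add_le (-I * (log (1 + u) - u))
          (2 * b * (I * c * (z - μ) - b) / ((I * μ * c + b) * c * z))
    _ ≤ (4 * ‖b‖ / (‖c‖ * ‖z‖)) ^ 2 + 2 * ‖b‖ * (‖c‖ + ‖b‖) / (‖c‖ * ‖z‖ / 2 * (‖c‖ * ‖z‖)) := by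
        gcongr
    _ = 4 * ‖b‖ * (5 * ‖b‖ + ‖c‖) / (‖c‖ * ‖z‖) ^ 2 := by
        field_simp
        ring

theorem exists_charFactor_eq_zero_near (hc : c ≠ 0) (hz : 8 * (‖b‖ + ‖c‖) ≤ ‖c‖ * ‖z‖)
    (hexp : exp (I * z) = 1) :
    ∃ μ, charFactor b c μ = 0 ∧
      ‖μ - z - 2 * b / (c * z)‖ ≤ 4 * ‖b‖ * (5 * ‖b‖ + ‖c‖) / (‖c‖ * ‖z‖) ^ 2 := by
  obtain ⟨μ, hμ, hlog⟩ := exists_mem_closedBall_I_mul_sub_eq_log hc hz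
  refine ⟨μ, charFactor_eq_zero_of_exp_eq (I_mul_mul_add_ne_zero hc hz hμ) ?_,
    norm_sub_sub_le_of_I_mul_sub_eq_log hc hz hμ hlog⟩
  have hne : 1 + expDefect b c μ ≠ 0 := slitPlane_ne_zero <|
    mem_slitPlane_of_norm_lt_one ((norm_expDefect_le_half hc hz hμ).trans_lt one_half_lt_one)
  rw [show I * μ = I * z + I * (μ - z) by ring, Complex.exp_add, hexp, hlog, one_mul, exp_log hne]

end LargeRoots

theorem exists_charFactor_eq_zero_near_two_pi_mul (b : ℂ) {c : ℂ} (hc : c ≠ 0) :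
    ∃ N : ℕ, ∀ n : ℕ, N ≤ n → ∃ μ, charFactor b c μ = 0 ∧
      ‖μ - 2 * π * n - b / c * (1 / (π * n))‖ ≤ ‖b‖ * (5 * ‖b‖ + ‖c‖) / (π * ‖c‖) ^ 2 / n ^ 2 := by
  have hC : 0 < ‖c‖ := norm_pos_iff.mpr hc
  refine ⟨⌈4 * (‖b‖ + ‖c‖) / (π * ‖c‖)⌉₊, fun n hn => ?_⟩
  have hn' : 4 * (‖b‖ + ‖c‖) / (π * ‖c‖) ≤ n := Nat.ceil_le.mp hn
  have hn0 : (0 : ℝ) < n := lt_of_lt_of_le (by positivity) hn'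
  have hnorm : ‖(2 * π * n : ℂ)‖ = 2 * π * n := by
    rw [show (2 * π * n : ℂ) = ((2 * π * n : ℝ) : ℂ) by push_cast; ring, norm_real,
      norm_of_nonneg (by positivity)]
  have hz : 8 * (‖b‖ + ‖c‖) ≤ ‖c‖ * ‖(2 * π * n : ℂ)‖ := by
    rw [div_le_iff₀ (by positivity)] at hn'
    rw [hnorm]
    linarith
  have hexp : exp (I * (2 * π * n)) = 1 :=
    Complex.exp_eq_one_iff.mpr ⟨n, by push_cast; ring⟩
  obtain ⟨μ, hroot, hbound⟩ := exists_charFactor_eq_zero_near hc hz hexp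
  refine ⟨μ, hroot, ?_⟩
  have hπn : (π * n : ℂ) ≠ 0 := by exact_mod_cast (by positivity : π * n ≠ 0)
  have hshift : b / c * (1 / (π * n)) = 2 * b / (c * (2 * π * n)) := by field_simp
  have hK : ‖b‖ * (5 * ‖b‖ + ‖c‖) / (π * ‖c‖) ^ 2 / n ^ 2
      = 4 * ‖b‖ * (5 * ‖b‖ + ‖c‖) / (‖c‖ * ‖(2 * π * n : ℂ)‖) ^ 2 := by
    rw [hnorm]
    field_simp
    ring
  rwa [hshift, hK]

end

theorem stmt_18_general (β₃ β₄ : ℂ) (hβ₃ : β₃ ≠ 1)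
    (D : ℂ → ℂ)
    (hD : ∀ μ : ℂ, D μ = (1 - exp (-I * μ)) *
      (I * μ * (1 - β₃) * (exp (I * μ) - 1) + β₄ * (exp (I * μ) + 1))) :
    (∀ μ : ℂ, D μ = 0 ↔
      ((∃ n : ℤ, μ = 2 * π * n) ∨
        I * μ * (1 - β₃) * (exp (I * μ) - 1) + β₄ * (exp (I * μ) + 1) = 0)) ∧
    ∃ (K : ℝ) (N : ℕ) (μ : ℕ → ℂ), ∀ n : ℕ, N ≤ n →
      I * μ n * (1 - β₃) * (exp (I * μ n) - 1) + β₄ * (exp (I * μ n) + 1) = 0 ∧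
      ‖μ n - 2 * π * n - (β₄ / (1 - β₃)) * (1 / (π * n))‖ ≤ K / (n : ℝ) ^ 2 := by
  refine ⟨fun μ => by rw [hD μ, mul_eq_zero, one_sub_exp_neg_I_mul_eq_zero_iff], ?_⟩
  obtain ⟨N, hN⟩ := exists_charFactor_eq_zero_near_two_pi_mul β₄ (sub_ne_zero.mpr hβ₃.symm)
  choose! μ hμ using hN
  exact ⟨_, N, μ, hμ⟩

theorem stmt_18 (β₃ β₄ : ℂ) (hβ₃ : β₃ ≠ 1) (hβ₄ : β₄ ≠ 0)
    (D : ℂ → ℂ)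
    (hD : ∀ μ : ℂ, D μ = (1 - exp (-I * μ)) *
      (I * μ * (1 - β₃) * (exp (I * μ) - 1) + β₄ * (exp (I * μ) + 1))) :
    (∀ μ : ℂ, D μ = 0 ↔
      ((∃ n : ℤ, μ = 2 * π * n) ∨
        I * μ * (1 - β₃) * (exp (I * μ) - 1) + β₄ * (exp (I * μ) + 1) = 0)) ∧
    ∃ (K : ℝ) (N : ℕ) (μ : ℕ → ℂ), ∀ n : ℕ, N ≤ n →
      I * μ n * (1 - β₃) * (exp (I * μ n) - 1) + β₄ * (exp (I * μ n) + 1) = 0 ∧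
      ‖μ n - 2 * π * n - (β₄ / (1 - β₃)) * (1 / (π * n))‖ ≤ K / (n : ℝ) ^ 2 :=
  stmt_18_general β₃ β₄ hβ₃ D hD
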